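/- arXiv:2012.05951 — 5 statements merged into one kernel-verified Lean document; each statement's English description precedes it below -/
import Mathlib

section
/- Fix n ≥ 1, d ≥ 2, and d ≤ k ≤ n(d−1). Write k = q(d−1) + r with 0 ≤ r < d−1. Then among all monomials of degree k in n variables not divisible by any x_i^d, the monomial m(n,d,k) = x₁^(d−1)⋯x_q^(d−1)·x_{q+1}^r has the minimum number of monomial divisors of degree d. -/
/-!
Moving one unit of exponent from a coordinate to one at least as large never increases the
number of degree-`d` divisors: the new divisors are exactly those using the raised coordinate
to its top, and trading that excess for the lowered coordinate injects them into the old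
divisors. Such moves strictly increase the sum of squares of the exponents, so they stop at an
exponent vector with at most one entry strictly between `0` and `d - 1`. Sorted decreasingly,
such a vector is `(d-1, …, d-1, s, 0, …, 0)`, hence determined by its degree: it is `m(n,d,k)`.
-/

/-- The number of monomial divisors of degree `d` of the monomial with exponent vector `v`:
exponent vectors `a ≤ v` (componentwise) of total degree `d`. -/
def divCount {n : ℕ} (d : ℕ) (v : Fin n → ℕ) : ℕ :=
  ((Finset.Iic v).filter fun a => ∑ i, a i = d).card

/-- The exponent vector of `m(n,d,k) = x₁^(d-1) ⋯ x_q^(d-1) x_{q+1}^r`. -/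
def mExp (n d q r : ℕ) : Fin n → ℕ := fun i =>
  if (i : ℕ) < q then d - 1 else if (i : ℕ) = q then r else 0

open Finset

section MoveUnit

variable {ι : Type*} [DecidableEq ι]

def moveUnit (v : ι → ℕ) (i j : ι) : ι → ℕ :=
  Function.update (Function.update v i (v i - 1)) j (v j + 1)

variable {v : ι → ℕ} {i j : ι}

lemma moveUnit_apply (hij : i ≠ j) (k : ι) :
    moveUnit v i j k = if k = i then v i - 1 else if k = j then v j + 1 else v k := by
  rcases eq_or_ne k i with rfl | hki
  · simp [moveUnit, hij]
  rcases eq_or_ne k j with rfl | hkj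
  · simp [moveUnit, hki]
  · simp [moveUnit, hki, hkj]

lemma sum_add_eq_of_eq_off_pair [Fintype ι] {M : Type*} [AddCommMonoid M] {u u' : ι → M}
    (hij : i ≠ j) (h : ∀ k, k ≠ i → k ≠ j → u k = u' k) :
    ∑ k, u k + (u' i + u' j) = ∑ k, u' k + (u i + u j) := by
  have hsplit (w : ι → M) : ∑ k, w k = ∑ k ∈ univ \ {i, j}, w k + (w i + w j) := by
    rw [← sum_sdiff (subset_univ {i, j}), sum_pair hij]
  have hoff : ∑ k ∈ univ \ {i, j}, u k = ∑ k ∈ univ \ {i, j}, u' k :=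
    sum_congr rfl fun k hk => by
      simp only [mem_sdiff, mem_insert, mem_singleton, not_or] at hk
      exact h k hk.2.1 hk.2.2
  rw [hsplit u, hsplit u', hoff]
  abel

lemma sum_comp_moveUnit [Fintype ι] {M : Type*} [AddCommMonoid M] (f : ℕ → M) (hij : i ≠ j) :
    ∑ k, f (moveUnit v i j k) + (f (v i) + f (v j))
      = ∑ k, f (v k) + (f (v i - 1) + f (v j + 1)) := by
  have := sum_add_eq_of_eq_off_pair (u := fun k => f (moveUnit v i j k)) (u' := fun k => f (v k))
    hij fun k hki hkj => by simp [moveUnit_apply hij, hki, hkj]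
  simpa [moveUnit_apply hij, hij.symm] using this

lemma sum_moveUnit [Fintype ι] (hij : i ≠ j) (hi : 0 < v i) :
    ∑ k, moveUnit v i j k = ∑ k, v k := by
  have := sum_comp_moveUnit (v := v) id hij
  simp only [id] at this
  omega

lemma sum_sq_lt_sum_sq_moveUnit [Fintype ι] (hij : i ≠ j) (hi : 0 < v i) (hle : v i ≤ v j) :
    ∑ k, v k ^ 2 < ∑ k, moveUnit v i j k ^ 2 := by
  have := sum_comp_moveUnit (v := v) (· ^ 2) hij
  obtain ⟨c, hc⟩ := Nat.exists_eq_add_of_lt hi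
  simp only [hc, zero_add, Nat.add_sub_cancel] at this hle
  nlinarith

end MoveUnit

section Divisors

variable {n : ℕ}

lemma mem_divisors_iff {d : ℕ} {v b : Fin n → ℕ} :
    b ∈ (Finset.Iic v).filter (fun a => ∑ i, a i = d) ↔ (∀ k, b k ≤ v k) ∧ ∑ k, b k = d := by
  simp [Pi.le_def]

lemma divCount_comp_perm (d : ℕ) (v : Fin n → ℕ) (σ : Equiv.Perm (Fin n)) :
    divCount d (v ∘ σ) = divCount d v := by
  refine card_equiv (σ.arrowCongr (Equiv.refl ℕ)) fun b => ?_
  simp only [mem_divisors_iff, Equiv.arrowCongr_apply, Equiv.coe_refl, Function.comp_apply, id]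
  rw [σ.forall_congr_left, Equiv.sum_comp σ.symm b]
  simp

lemma divCount_moveUnit_le (d : ℕ) {v : Fin n → ℕ} {i j : Fin n} (hij : i ≠ j) (hi : 0 < v i)
    (hle : v i ≤ v j) : divCount d (moveUnit v i j) ≤ divCount d v := by
  -- divisors that do not divide `v` have `b j = v j + 1`; trade the excess for a full `i`-entry
  let f : (Fin n → ℕ) → Fin n → ℕ := fun b k =>
    if v j < b j then (if k = i then v i else if k = j then b i + b j - v i else b k) else b k
  refine card_le_card_of_injOn f (fun b hb => ?_) (fun b₁ hb₁ b₂ hb₂ heq => ?_)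
  · rw [mem_coe, mem_divisors_iff] at hb ⊢
    obtain ⟨hbv, hbd⟩ := hb
    simp only [moveUnit_apply hij] at hbv
    have hbi := hbv i
    have hbj := hbv j
    simp only [hij.symm, if_true, if_false] at hbi hbj
    by_cases hc : v j < b j
    · refine ⟨fun k => ?_, ?_⟩
      · have hbk := hbv k
        simp only [f, if_pos hc]
        split_ifs at hbk ⊢ <;> subst_vars <;> omega
      · have := sum_add_eq_of_eq_off_pair (u := f b) (u' := b) hij fun k hki hkj => by
          simp [f, hki, hkj]
        have hfi : f b i = v i := by simp [f, hc]
        have hfj : f b j = b i + b j - v i := by simp [f, hc, hij.symm]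
        rw [hfi, hfj] at this
        omega
    · have hfb : f b = b := funext fun k => if_neg hc
      rw [hfb]
      refine ⟨fun k => ?_, hbd⟩
      have hbk := hbv k
      split_ifs at hbk <;> subst_vars <;> omega
  · rw [mem_coe, mem_divisors_iff] at hb₁ hb₂
    simp only [moveUnit_apply hij] at hb₁ hb₂
    have h1i := hb₁.1 i
    have h2i := hb₂.1 i
    have h1j := hb₁.1 j
    have h2j := hb₂.1 j
    simp only [hij.symm, if_true, if_false] at h1i h2i h1j h2j
    funext k
    have hk := congrFun heq k
    have hi' := congrFun heq i
    have hj' := congrFun heq j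
    simp only [f, hij.symm, if_true, if_false] at hk hi' hj'
    split_ifs at hk hi' hj' <;> subst_vars <;> omega

def IsCompressed {ι : Type*} (e : ℕ) (b : ι → ℕ) : Prop :=
  {i | 0 < b i ∧ b i < e}.Subsingleton

lemma IsCompressed.comp {ι κ : Type*} {e : ℕ} {b : ι → ℕ} (hb : IsCompressed e b) {g : κ → ι}
    (hg : g.Injective) : IsCompressed e (b ∘ g) :=
  hb.preimage hg

lemma exists_isCompressed_divCount_le (d : ℕ) {e : ℕ} (a : Fin n → ℕ) (ha : ∀ i, a i ≤ e) :
    ∃ b : Fin n → ℕ, (∀ i, b i ≤ e) ∧ ∑ i, b i = ∑ i, a i ∧ IsCompressed e b ∧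
      divCount d b ≤ divCount d a := by
  induction hN : n * e ^ 2 - ∑ i, a i ^ 2 using Nat.strong_induction_on generalizing a with
  | _ N ih =>
  by_cases hcomp : IsCompressed e a
  · exact ⟨a, ha, rfl, hcomp, le_rfl⟩
  obtain ⟨i, ⟨hi0, hie⟩, j, ⟨hj0, hje⟩, hij⟩ := Set.not_subsingleton_iff.mp hcomp
  wlog hle : a i ≤ a j generalizing i j
  · exact this j hj0 hje i hij.symm hi0 hie (le_of_not_ge hle)
  have ha' (k : Fin n) : moveUnit a i j k ≤ e := by
    have := ha k
    rw [moveUnit_apply hij]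
    split_ifs <;> omega
  have hbound : ∑ k, moveUnit a i j k ^ 2 ≤ n * e ^ 2 := by
    simpa using sum_le_sum fun k (_ : k ∈ univ) => Nat.pow_le_pow_left (ha' k) 2
  have hlt := sum_sq_lt_sum_sq_moveUnit hij hi0 hle
  obtain ⟨b, hb, hsum, hcomp, hdiv⟩ := ih _ (by omega) _ ha' rfl
  exact ⟨b, hb, hsum.trans (sum_moveUnit hij hi0), hcomp,
    hdiv.trans (divCount_moveUnit_le d hij hi0 hle)⟩

lemma exists_perm_antitone_comp {α : Type*} [LinearOrder α] (b : Fin n → α) :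
    ∃ σ : Equiv.Perm (Fin n), Antitone (b ∘ σ) :=
  ⟨Tuple.sort (OrderDual.toDual ∘ b), monotone_toDual_comp_iff.mp (Tuple.monotone_sort _)⟩

lemma sum_eq_sum_Iio_add_add_sum_Ioi {M : Type*} [AddCommMonoid M] (b : Fin n → M) (i : Fin n) :
    ∑ k, b k = ∑ k ∈ Iio i, b k + b i + ∑ k ∈ Ioi i, b k := by
  rw [← sum_filter_add_sum_filter_not univ (· < i), filter_gt_eq_Iio,
    show univ.filter (¬ · < i) = Ici i by ext; simp, Ici_eq_cons_Ioi, sum_cons, add_assoc]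

lemma IsCompressed.apply_eq_min_of_antitone {e : ℕ} {b : Fin n → ℕ} (hc : IsCompressed e b)
    (hanti : Antitone b) (hb : ∀ i, b i ≤ e) (i : Fin n) :
    b i = min e (∑ k, b k - i * e) := by
  -- with truncated subtraction, the right side is `(e, …, e, s, 0, …, 0)`, of sum `∑ k, b k`
  have hbefore : ∑ k ∈ Iio i, b k ≤ i * e := by
    simpa using sum_le_sum fun k (_ : k ∈ Iio i) => hb k
  have hfull (hi : b i ≠ 0) : ∑ k ∈ Iio i, b k = i * e := by
    rw [sum_congr rfl fun k hk => ?_, sum_const, Fin.card_Iio, smul_eq_mul]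
    have hki := hanti (mem_Iio.mp hk).le
    have hbk := hb k
    by_contra hne
    exact (mem_Iio.mp hk).ne (hc ⟨by omega, by omega⟩ ⟨by omega, by omega⟩)
  have hempty (hi : b i < e) : ∑ k ∈ Ioi i, b k = 0 := by
    refine sum_eq_zero fun k hk => ?_
    have hik := hanti (mem_Ioi.mp hk).le
    by_contra hne
    exact (mem_Ioi.mp hk).ne (hc ⟨by omega, by omega⟩ ⟨by omega, by omega⟩)
  rw [sum_eq_sum_Iio_add_add_sum_Ioi b i]
  have := hb i
  omega

end Divisors

lemma mExp_apply_eq_min {n d q r : ℕ} (hr : r < d - 1) (i : Fin n) :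
    mExp n d q r i = min (d - 1) (q * (d - 1) + r - i * (d - 1)) := by
  rcases lt_trichotomy (i : ℕ) q with hiq | rfl | hqi
  · have : (i + 1) * (d - 1) ≤ q * (d - 1) := Nat.mul_le_mul_right _ hiq
    simp only [mExp, if_pos hiq]
    rw [add_mul] at this
    omega
  · simp [mExp]
    omega
  · have : (q + 1) * (d - 1) ≤ i * (d - 1) := Nat.mul_le_mul_right _ hqi
    simp only [mExp, if_neg (by omega : ¬ (i : ℕ) < q), if_neg hqi.ne']
    rw [add_mul] at this
    omega

theorem stmt_4_general (n d k q r : ℕ) (hqr : k = q * (d - 1) + r) (hr : r < d - 1)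
    (a : Fin n → ℕ) (ha : ∀ i, a i ≤ d - 1) (hadeg : ∑ i, a i = k) :
    divCount d (mExp n d q r) ≤ divCount d a := by
  obtain ⟨b, hb, hsum, hcomp, hle⟩ := exists_isCompressed_divCount_le d a ha
  obtain ⟨σ, hσ⟩ := exists_perm_antitone_comp b
  have hmExp : mExp n d q r = b ∘ σ := funext fun i => by
    rw [mExp_apply_eq_min hr, (hcomp.comp σ.injective).apply_eq_min_of_antitone hσ (fun k => hb _),
      Function.comp_def, Equiv.sum_comp σ b, hsum, hadeg, hqr]
  calc divCount d (mExp n d q r) = divCount d b := by rw [hmExp, divCount_comp_perm]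
    _ ≤ divCount d a := hle

/-- For `n ≥ 1`, `d ≥ 2`, `d ≤ k ≤ n(d-1)` with `k = q(d-1) + r`, `0 ≤ r < d-1`:
among all monomials of degree `k` in `n` variables not divisible by any `x_i^d`,
the monomial `m(n,d,k) = x₁^(d-1) ⋯ x_q^(d-1) x_{q+1}^r` has the minimum number of
monomial divisors of degree `d`. -/
theorem stmt_4 (n d k q r : ℕ) (hn : 1 ≤ n) (hd : 2 ≤ d) (hdk : d ≤ k)
    (hk : k ≤ n * (d - 1)) (hqr : k = q * (d - 1) + r) (hr : r < d - 1)
    (a : Fin n → ℕ) (ha : ∀ i, a i ≤ d - 1) (hadeg : ∑ i, a i = k) :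
    divCount d (mExp n d q r) ≤ divCount d a :=
  stmt_4_general n d k q r hqr hr a ha hadeg
end

section
/- Fix n ≥ 1, d ≥ 2, and d ≤ k ≤ n(d−1), and write k = q(d−1) + r with 0 ≤ r < d−1. The number of monomials of degree d in n variables dividing m(n,d,k) = x₁^(d−1)⋯x_q^(d−1)·x_{q+1}^r equals C(n,d,k) = binom(q+d, d) − binom(q+d−r−1, q) − q. -/
/-!
A degree-`d` divisor of `m` is an exponent vector supported on `x₁, …, x_{q+1}` with sum `d`
(stars and bars: `binom(q+d, d)` of them) whose last exponent is at most `r` and whose other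
exponents stay below `d`. Vectors whose exponent of `x_{q+1}` exceeds `r` correspond, after
subtracting `r + 1` from it, to vectors of sum `d - r - 1`: `binom(q+d-r-1, q)` of them. Among the
rest, an exponent `≥ d` forces a pure power `x_i^d` with `i ≤ q`: `q` more. When `q = n` there is
no `x_{q+1}`, but then `m` is also the monomial for `q = n - 1`, `r = d - 1`, and Pascal's rule
matches the two formulas.
-/

open Finset

section piAntidiag

variable {ι : Type*} [DecidableEq ι]

theorem card_piAntidiag_nat (s : Finset ι) (d : ℕ) :
    #(piAntidiag s d) = (#s + d - 1).choose d := by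
  simpa [finsuppAntidiag] using card_finsuppAntidiag_nat_eq_choose (s := s) d

theorem mem_piAntidiag_iff_sum_univ [Fintype ι] {s : Finset ι} {d : ℕ} {a : ι → ℕ} :
    a ∈ piAntidiag s d ↔ ∑ i, a i = d ∧ ∀ i, a i ≠ 0 → i ∈ s := by
  rw [mem_piAntidiag]
  refine and_congr_left fun hsupp => ?_
  rw [sum_subset (subset_univ s) fun i _ hi => not_not.1 (mt (hsupp i) hi)]

theorem eq_single_of_mem_piAntidiag {s : Finset ι} {d : ℕ} {a : ι → ℕ} (ha : a ∈ piAntidiag s d)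
    {i : ι} (hi : i ∈ s) (hdi : d ≤ a i) : a = Pi.single i d := by
  obtain ⟨hsum, hsupp⟩ := mem_piAntidiag.1 ha
  change ∑ j ∈ s, a j = d at hsum
  have hsplit := add_sum_erase s a hi
  have hrest : ∑ j ∈ s.erase i, a j = 0 := by omega
  ext j
  rcases eq_or_ne j i with rfl | hj
  · rw [Pi.single_eq_same]; omega
  · rw [Pi.single_eq_of_ne hj]
    by_contra h
    exact h (sum_eq_zero_iff.1 hrest j (mem_erase.2 ⟨hj, hsupp j h⟩))

theorem filter_lt_apply_piAntidiag {s : Finset ι} {i : ι} (hi : i ∈ s) {r d : ℕ} (hrd : r < d) :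
    (piAntidiag s d).filter (fun a => r < a i)
      = (piAntidiag s (d - (r + 1))).map (addRightEmbedding (Pi.single i (r + 1))) := by
  ext a
  simp only [mem_filter, mem_map, mem_piAntidiag, addRightEmbedding_apply]
  constructor
  · rintro ⟨⟨hsum, hsupp⟩, hlt⟩
    have hle : Pi.single i (r + 1) ≤ a := by
      intro j
      rcases eq_or_ne j i with rfl | hj
      · simpa using hlt
      · simp [Pi.single_eq_of_ne hj]
    refine ⟨a - Pi.single i (r + 1), ⟨?_, fun j hj => hsupp j ?_⟩, tsub_add_cancel_of_le hle⟩
    · change ∑ j ∈ s, (a j - (Pi.single i (r + 1) : ι → ℕ) j) = _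
      rw [sum_tsub_distrib _ fun j _ => hle j, hsum, sum_pi_single', if_pos hi]
    · exact fun h => hj (by simp [h])
  · rintro ⟨b, ⟨hsum, hsupp⟩, rfl⟩
    refine ⟨⟨?_, fun j hj => ?_⟩, by simp only [Pi.add_apply, Pi.single_eq_same]; omega⟩
    · change ∑ j ∈ s, (b j + (Pi.single i (r + 1) : ι → ℕ) j) = _
      rw [sum_add_distrib, hsum, sum_pi_single', if_pos hi]
      omega
    · rcases eq_or_ne j i with rfl | hji
      · exact hi
      · exact hsupp j (by simpa [Pi.single_eq_of_ne hji] using hj)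

theorem card_filter_lt_apply_piAntidiag {s : Finset ι} {i : ι} (hi : i ∈ s) {r d : ℕ}
    (hrd : r < d) :
    #((piAntidiag s d).filter (fun a => r < a i))
      = (#s + (d - (r + 1)) - 1).choose (d - (r + 1)) := by
  rw [filter_lt_apply_piAntidiag hi hrd, card_map, card_piAntidiag_nat]

end piAntidiag

theorem choose_add_eq_choose_sub_one_add_choose {q d : ℕ} (hq : 0 < q) (hd : 0 < d) :
    (q + d).choose d = (q + d - 1).choose q + (q - 1 + d).choose d := by
  obtain ⟨m, rfl⟩ : ∃ m, q = m + 1 := ⟨q - 1, by omega⟩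
  obtain ⟨e, rfl⟩ : ∃ e, d = e + 1 := ⟨d - 1, by omega⟩
  have hsymm : (m + e + 1).choose e = (m + e + 1).choose (m + 1) := by
    rw [show m + e + 1 = e + (m + 1) by omega, Nat.choose_symm_add]
  rw [show m + 1 + (e + 1) - 1 = m + e + 1 by omega,
    show m + 1 - 1 + (e + 1) = m + e + 1 by omega,
    show m + 1 + (e + 1) = m + e + 1 + 1 by omega, Nat.choose_succ_succ', hsymm]

section mExp

variable {n d r : ℕ}

theorem le_mExp_iff {p : Fin n} {a : Fin n → ℕ} (hd : 0 < d) :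
    a ≤ mExp n d p r ↔ (∀ i, a i ≠ 0 → i ≤ p) ∧ a p ≤ r ∧ ∀ i < p, a i < d := by
  simp only [Pi.le_def, mExp, Fin.le_def, Fin.lt_def, Fin.val_inj]
  constructor
  · intro h
    refine ⟨fun i hi => ?_, by simpa using h p, fun i hi => ?_⟩
    · by_contra hpi
      have := h i
      rw [if_neg (by omega), if_neg (by omega)] at this
      omega
    · have := h i
      rw [if_pos hi] at this
      omega
  · rintro ⟨hsupp, hp, hlt⟩ i
    split_ifs with h₁ h₂
    · have := hlt i h₁; omega
    · rwa [h₂]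
    · by_contra h
      have := hsupp i (by omega)
      omega

theorem image_single_subset_filter_piAntidiag (p : Fin n) (d r : ℕ) :
    (Iio p).image (fun i => Pi.single i d)
      ⊆ (piAntidiag (Iic p) d).filter (fun a => a p ≤ r) := by
  intro a
  simp only [mem_image, mem_Iio, mem_filter, mem_piAntidiag]
  rintro ⟨i, hi, rfl⟩
  refine ⟨⟨?_, fun j hj => ?_⟩, by simp [Pi.single_eq_of_ne hi.ne']⟩
  · rw [sum_pi_single', if_pos (mem_Iic.2 hi.le)]
  · rcases eq_or_ne j i with rfl | hji
    · exact mem_Iic.2 hi.le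
    · simp [Pi.single_eq_of_ne hji] at hj

theorem filter_Iic_mExp_sum_eq {p : Fin n} (hd : 0 < d) :
    (Iic (mExp n d p r)).filter (fun a => ∑ i, a i = d)
      = (piAntidiag (Iic p) d).filter (fun a => a p ≤ r)
          \ (Iio p).image (fun i => Pi.single i d) := by
  ext a
  simp only [mem_filter, mem_Iic, mem_sdiff, mem_image, mem_Iio, le_mExp_iff hd,
    mem_piAntidiag_iff_sum_univ]
  constructor
  · rintro ⟨⟨hsupp, hp, hlt⟩, hsum⟩
    refine ⟨⟨⟨hsum, hsupp⟩, hp⟩, ?_⟩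
    rintro ⟨i, hi, rfl⟩
    simpa using hlt i hi
  · rintro ⟨⟨⟨hsum, hsupp⟩, hp⟩, hsingle⟩
    refine ⟨⟨hsupp, hp, fun i hi => ?_⟩, hsum⟩
    by_contra! hdi
    have ha : a ∈ piAntidiag (Iic p) d :=
      mem_piAntidiag_iff_sum_univ.2 ⟨hsum, fun j hj => mem_Iic.2 (hsupp j hj)⟩
    exact hsingle ⟨i, hi, (eq_single_of_mem_piAntidiag ha (mem_Iic.2 hi.le) hdi).symm⟩

theorem divCount_mExp (p : Fin n) (hr : r < d) :
    divCount d (mExp n d p r) = (p + d).choose d - (p + d - r - 1).choose p - p := by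
  have hsingle : Function.Injective fun i : Fin n => (Pi.single i d : Fin n → ℕ) := by
    intro i j hij
    by_contra hne
    have := congrFun hij i
    simp only [Pi.single_eq_same, Pi.single_eq_of_ne hne] at this
    omega
  have hsplit := card_filter_add_card_filter_not (s := piAntidiag (Iic p) d) (fun a => a p ≤ r)
  simp only [not_le] at hsplit
  rw [card_filter_lt_apply_piAntidiag (mem_Iic.2 le_rfl) hr, card_piAntidiag_nat,
    Fin.card_Iic] at hsplit
  rw [divCount, filter_Iic_mExp_sum_eq (by omega),
    card_sdiff_of_subset (image_single_subset_filter_piAntidiag p d r),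
    card_image_of_injective _ hsingle, Fin.card_Iio]
  have h₁ : (p + 1 + d - 1).choose d = (p + d).choose d := by congr 1; omega
  have h₂ : (p + 1 + (d - (r + 1)) - 1).choose (d - (r + 1)) = (p + d - r - 1).choose p := by
    rw [show p + 1 + (d - (r + 1)) - 1 = (p : ℕ) + (d - (r + 1)) by omega, ← Nat.choose_symm_add]
    congr 1; omega
  omega

theorem mExp_self_zero (hn : 0 < n) : mExp n d n 0 = mExp n d (n - 1) (d - 1) := by
  funext i
  have := i.isLt
  simp only [mExp]
  split_ifs <;> omega

end mExp

theorem stmt_5_general (n d k q r : ℕ) (hn : 1 ≤ n)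
    (hk : k ≤ n * (d - 1)) (hqr : k = q * (d - 1) + r) (hr : r < d - 1) :
    divCount d (mExp n d q r)
      = Nat.choose (q + d) d - Nat.choose (q + d - r - 1) q - q := by
  have hqn : q ≤ n := Nat.le_of_mul_le_mul_right (by omega) (by omega : 0 < d - 1)
  rcases hqn.lt_or_eq with hq | rfl
  · exact divCount_mExp ⟨q, hq⟩ (by omega)
  obtain rfl : r = 0 := by omega
  rw [mExp_self_zero (by omega), divCount_mExp ⟨q - 1, by omega⟩ (by omega)]
  have hself : q - 1 + d - (d - 1) - 1 = q - 1 := by omega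
  simp only [hself, Nat.choose_self]
  rw [choose_add_eq_choose_sub_one_add_choose (q := q) (d := d) (by omega) (by omega),
    Nat.sub_zero]
  omega

/-- For `n ≥ 1`, `d ≥ 2`, `d ≤ k ≤ n(d-1)` with `k = q(d-1) + r`, `0 ≤ r < d-1`:
the number of degree-`d` monomial divisors of `m(n,d,k)` equals
`C(n,d,k) = binom(q+d, d) − binom(q+d−r−1, q) − q`. -/
theorem stmt_5 (n d k q r : ℕ) (hn : 1 ≤ n) (hd : 2 ≤ d) (hdk : d ≤ k)
    (hk : k ≤ n * (d - 1)) (hqr : k = q * (d - 1) + r) (hr : r < d - 1) :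
    divCount d (mExp n d q r)
      = Nat.choose (q + d) d - Nat.choose (q + d - r - 1) q - q :=
  stmt_5_general n d k q r hn hk hqr hr
end

section
/- Fix n ≥ 1, d ≥ 2, and d ≤ k ≤ n(d−1), with N = N(n,d,k) as above. There exists a set of N − 1 distinct monomials of degree d in n variables, including x₁^d,…,x_n^d, such that the ideal J they generate satisfies J_k ⊊ K[x₁,…,x_n]_k. -/
/-!
The set witnessing the bound consists of all degree-`d` monomials that do not divide
`m = x₁^(d-1) ⋯ x_q^(d-1) x_{q+1}^r`. It has `binom(n+d-1, d) - C(n,d,k)` elements, contains every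
`x_i^d` because all exponents of `m` are below `d`, and the monomial ideal it spans misses the
degree-`k` monomial `m`, since a monomial lies in a monomial ideal only if some generator divides it.
-/

open MvPolynomial

/-- `C(n,d,k)`, the number of degree-`d` monomial divisors of `m(n,d,k)`. -/
def Cndk (n d q r : ℕ) : ℕ := divCount d (mExp n d q r)

/-- `N(n,d,k) = binom(n+d-1, d) − C(n,d,k) + 1`. -/
def Nndk (n d q r : ℕ) : ℕ := Nat.choose (n + d - 1) d - Cndk n d q r + 1

open Finset

section MonomialIdeal

variable {σ R : Type*} [CommSemiring R] [Nontrivial R]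

theorem monomial_one_mem_ideal_span_monomial_image_iff {v : σ →₀ ℕ} {s : Set (σ →₀ ℕ)} :
    monomial v (1 : R) ∈ Ideal.span ((fun w => monomial w (1 : R)) '' s) ↔ ∃ w ∈ s, w ≤ v := by
  classical
  simp [mem_ideal_span_monomial_image, support_monomial]

end MonomialIdeal

section NonDivisors

variable {n : ℕ}

noncomputable def nonDivisors (d : ℕ) (m : Fin n →₀ ℕ) : Finset (Fin n →₀ ℕ) :=
  (univ.finsuppAntidiag d).filter fun a => ¬ a ≤ m

theorem mem_nonDivisors {d : ℕ} {m a : Fin n →₀ ℕ} :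
    a ∈ nonDivisors d m ↔ ∑ i, a i = d ∧ ¬ a ≤ m := by
  simp [nonDivisors]

theorem card_filter_le_finsuppAntidiag (d : ℕ) (m : Fin n →₀ ℕ) :
    #((univ.finsuppAntidiag d).filter (· ≤ m)) = divCount d ⇑m := by
  refine card_equiv Finsupp.equivFunOnFinite fun a => ?_
  simp [and_comm, Finsupp.le_def, Pi.le_def]

theorem card_nonDivisors (d : ℕ) (m : Fin n →₀ ℕ) :
    #(nonDivisors d m) = (n + d - 1).choose d - divCount d ⇑m := by
  rw [nonDivisors, filter_not, card_sdiff_of_subset (filter_subset _ _),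
    card_filter_le_finsuppAntidiag, card_finsuppAntidiag_nat_eq_choose, card_univ,
    Fintype.card_fin]

theorem single_mem_nonDivisors {d : ℕ} {m : Fin n →₀ ℕ} {i : Fin n} (h : m i < d) :
    Finsupp.single i d ∈ nonDivisors d m := by
  refine mem_nonDivisors.2 ⟨by simp, fun hle => ?_⟩
  simpa using (hle i).trans_lt h

theorem monomial_notMem_span_nonDivisors (R : Type*) [CommSemiring R] [Nontrivial R]
    (d : ℕ) (m : Fin n →₀ ℕ) :
    monomial m (1 : R) ∉ Ideal.span ((fun w => monomial w (1 : R)) '' ↑(nonDivisors d m)) := by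
  rw [monomial_one_mem_ideal_span_monomial_image_iff]
  rintro ⟨w, hw, hle⟩
  exact (mem_nonDivisors.1 hw).2 hle

end NonDivisors

theorem mExp_le {n d q r : ℕ} (hr : r ≤ d - 1) (i : Fin n) : mExp n d q r i ≤ d - 1 := by
  unfold mExp
  split_ifs <;> omega

theorem sum_mExp {n d q r : ℕ} (hq : q ≤ n) :
    ∑ i, mExp n d q r i = q * (d - 1) + if q < n then r else 0 := by
  have hsplit : ∀ i : ℕ, (if i < q then d - 1 else if i = q then r else 0) =
      (if i < q then d - 1 else 0) + if i = q then r else 0 := by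
    intro i
    split_ifs <;> omega
  unfold mExp
  rw [Fin.sum_univ_eq_sum_range (fun i => if i < q then d - 1 else if i = q then r else 0),
    sum_congr rfl fun i _ => hsplit i, sum_add_distrib, sum_ite_eq', sum_ite, sum_const_zero]
  simp only [mem_range]
  rw [range_eq_Ico, Ico_filter_lt, min_eq_right hq, sum_const, Nat.card_Ico, smul_eq_mul, add_zero,
    Nat.sub_zero]

theorem stmt_7_general (K : Type) [Field K] (n d k q r : ℕ)
    (hk : k ≤ n * (d - 1)) (hqr : k = q * (d - 1) + r) (hr : r < d - 1) :
    ∃ S : Finset (Fin n →₀ ℕ),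
      (∀ v ∈ S, ∑ i, v i = d) ∧
      (∀ i : Fin n, Finsupp.single i d ∈ S) ∧
      S.card = Nndk n d q r - 1 ∧
      ∃ v : Fin n →₀ ℕ, (∑ i, v i = k) ∧
        monomial v (1 : K) ∉
          Ideal.span ((fun w => monomial w (1 : K)) '' (S : Set (Fin n →₀ ℕ))) := by
  set m : Fin n →₀ ℕ := Finsupp.equivFunOnFinite.symm (mExp n d q r)
  have hm : ⇑m = mExp n d q r := Finsupp.coe_equivFunOnFinite_symm _
  have hq : q ≤ n := Nat.le_of_mul_le_mul_right (by omega) (by omega : 0 < d - 1)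
  refine ⟨nonDivisors d m, fun v hv => (mem_nonDivisors.1 hv).1,
    fun i => single_mem_nonDivisors ?_, ?_, m, ?_, monomial_notMem_span_nonDivisors K d m⟩
  · rw [hm]
    exact (mExp_le hr.le i).trans_lt (by omega)
  · rw [card_nonDivisors, Nndk, Cndk, hm]
    omega
  · rw [hm, sum_mExp hq]
    split_ifs with hqn
    · exact hqr.symm
    · obtain rfl : q = n := by omega
      omega

/-- Optimality of `N(n,d,k)`: there exists a set of `N − 1` distinct monomials of degree
`d` in `n` variables, including `x₁^d, …, x_n^d`, such that the ideal `J` they generate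
satisfies `J_k ⊊ K[x₁,…,x_n]_k`, i.e. some monomial of degree `k` is not in `J`. -/
theorem stmt_7 (K : Type) [Field K] (n d k q r : ℕ) (hn : 1 ≤ n) (hd : 2 ≤ d)
    (hdk : d ≤ k) (hk : k ≤ n * (d - 1)) (hqr : k = q * (d - 1) + r) (hr : r < d - 1) :
    ∃ S : Finset (Fin n →₀ ℕ),
      (∀ v ∈ S, ∑ i, v i = d) ∧
      (∀ i : Fin n, Finsupp.single i d ∈ S) ∧
      S.card = Nndk n d q r - 1 ∧
      ∃ v : Fin n →₀ ℕ, (∑ i, v i = k) ∧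
        monomial v (1 : K) ∉
          Ideal.span ((fun w => monomial w (1 : K)) '' (S : Set (Fin n →₀ ℕ))) :=
  stmt_7_general K n d k q r hk hqr hr
end

section
/- Fix n ≥ 1, d ≥ 2, d ≤ k ≤ n(d−1), and N = N(n,d,k). Let I ⊆ K[x₁,…,x_n] be an ideal generated by N linearly independent homogeneous polynomials of degree d such that (for some fixed monomial order) the leading-term ideal of I contains x₁^d,…,x_n^d. Then I contains every homogeneous polynomial of degree k. -/
open MvPolynomial

/-- The leading exponent of a polynomial with respect to a monomial order `m`. -/
noncomputable def leadExp {n : ℕ} {K : Type} [Field K] (m : MonomialOrder (Fin n))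
    (p : MvPolynomial (Fin n) K) : Fin n →₀ ℕ :=
  m.toSyn.symm (p.support.sup fun v => m.toSyn v)

/-- The leading term ideal `Lt(I)`. -/
noncomputable def ltIdeal {n : ℕ} {K : Type} [Field K] (m : MonomialOrder (Fin n))
    (I : Ideal (MvPolynomial (Fin n) K)) : Ideal (MvPolynomial (Fin n) K) :=
  Ideal.span {q | ∃ p ∈ I, p ≠ 0 ∧ q = monomial (leadExp m p) (1 : K)}

/-!
A homogeneous ideal contains every form of degree `k` as soon as every monomial of degree `k`
is the leading monomial of one of its elements: cancel leading terms. A monomial `x ^ w` of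
degree `k` with some `w i ≥ d` is a multiple of a leading monomial dividing `x i ^ d`. Otherwise
all `w i ≤ d - 1`, and `x ^ w` has at least `C(n,d,k)` divisors of degree `d`: their number is
the coefficient of `t ^ d` in `∏ i, (1 + t + ⋯ + t ^ (w i))`, and moving a unit from a smaller
exponent to a larger one only lowers these coefficients, until `w` is compressed to
`m(n,d,k)`. The span of the `N` generators has `N` distinct leading monomials of degree `d`,
and `N + C(n,d,k)` exceeds the number of monomials of degree `d`, so one of them divides `x ^ w`.
-/

open Finset

lemma eq_and_eq_of_mul_add_eq_mul_add {a s q r D : ℕ} (hs : s < D) (hr : r < D)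
    (h : a * D + s = q * D + r) : a = q ∧ s = r := by
  have hdiv : ∀ x t, t < D → (x * D + t) / D = x := fun x t ht => by
    rw [Nat.mul_comm, Nat.mul_add_div (by omega), Nat.div_eq_of_lt ht, add_zero]
  have haq : a = q := by rw [← hdiv a s hs, h, hdiv q r hr]
  subst haq
  omega

section GeomPoly

open Polynomial

noncomputable def geomPoly (a : ℕ) : ℕ[X] := ∑ j ∈ range (a + 1), Polynomial.X ^ j

lemma geomPoly_zero : geomPoly 0 = 1 := by simp [geomPoly]

lemma geomPoly_succ (a : ℕ) : geomPoly (a + 1) = geomPoly a + Polynomial.X ^ (a + 1) :=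
  sum_range_succ _ _

lemma divCount_eq_coeff_prod {n : ℕ} (d : ℕ) (v : Fin n → ℕ) :
    divCount d v = (∏ i, geomPoly (v i)).coeff d := by
  have hIic : Iic v = Fintype.piFinset fun i => range (v i + 1) := by
    ext a; simp [Fintype.mem_piFinset, Pi.le_def]
  simp only [geomPoly, prod_univ_sum, prod_pow_eq_pow_sum, finsetSum_coeff, Polynomial.coeff_X_pow,
    sum_boole, divCount, hIic, Nat.cast_id, eq_comm]

lemma geomPoly_mul_geomPoly_succ {a c : ℕ} (hca : c ≤ a) :
    geomPoly a * geomPoly (c + 1) =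
      geomPoly (a + 1) * geomPoly c + ∑ j ∈ Ico (c + 1) (a + 1), Polynomial.X ^ j := by
  induction a, hca using Nat.le_induction with
  | base => simp [mul_comm]
  | succ a hca ih =>
    have hc : geomPoly (c + 1) = Polynomial.X * geomPoly c + 1 := geom_sum_succ
    calc geomPoly (a + 1) * geomPoly (c + 1)
        = geomPoly a * geomPoly (c + 1) + Polynomial.X ^ (a + 1) * geomPoly (c + 1) := by
          rw [geomPoly_succ a, add_mul]
      _ = geomPoly (a + 1 + 1) * geomPoly c + ∑ j ∈ Ico (c + 1) (a + 1 + 1), Polynomial.X ^ j := by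
          rw [ih, hc, geomPoly_succ (a + 1), sum_Ico_succ_top (show c + 1 ≤ a + 1 by omega)]
          ring

variable {ι : Type*}

def IsBalanced (D : ℕ) (v : ι → ℕ) : Prop :=
  ∀ i j, i ≠ j → 0 < v i → v i < D → 0 < v j → v j = D

lemma exists_exchange_of_not_isBalanced {D : ℕ} {v : ι → ℕ} (hv : ∀ i, v i ≤ D)
    (hbal : ¬ IsBalanced D v) : ∃ i j, i ≠ j ∧ 1 ≤ v j ∧ v j ≤ v i ∧ v i < D := by
  simp only [IsBalanced, not_forall] at hbal
  obtain ⟨i, j, hij, hi0, hiD, hj0, hjD⟩ := hbal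
  rcases le_total (v j) (v i) with h | h
  · exact ⟨i, j, hij, hj0, h, hiD⟩
  · exact ⟨j, i, Ne.symm hij, hi0, h, lt_of_le_of_ne (hv j) hjD⟩

variable [Fintype ι]

lemma prod_geomPoly_of_isBalanced {D q r : ℕ} (hr : r < D) {v : ι → ℕ} (hv : ∀ i, v i ≤ D)
    (hsum : ∑ i, v i = q * D + r) (hbal : IsBalanced D v) :
    ∏ i, geomPoly (v i) = geomPoly D ^ q * geomPoly r := by
  set A := univ.filter fun i => v i = D
  set B := univ.filter fun i => ¬ v i = D
  have hprodA : ∏ i ∈ A, geomPoly (v i) = geomPoly D ^ #A := by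
    rw [prod_congr rfl fun i hi => by rw [(mem_filter.1 hi).2], prod_const]
  have hsumA : ∑ i ∈ A, v i = #A * D := by
    rw [sum_congr rfl fun i hi => (mem_filter.1 hi).2, sum_const, smul_eq_mul]
  -- balancedness leaves at most one nonzero entry off `A`
  have hB : ∑ i ∈ B, v i < D ∧ ∏ i ∈ B, geomPoly (v i) = geomPoly (∑ i ∈ B, v i) := by
    by_cases h : ∃ g ∈ B, v g ≠ 0
    · obtain ⟨g, hgB, hg0⟩ := h
      have hgD : v g < D := lt_of_le_of_ne (hv g) (mem_filter.1 hgB).2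
      have hzero : ∀ l ∈ B, l ≠ g → v l = 0 := fun l hl hlg => by
        by_contra hl0
        exact (mem_filter.1 hl).2 (hbal g l (Ne.symm hlg) (by omega) hgD (by omega))
      rw [sum_eq_single_of_mem g hgB hzero,
        prod_eq_single_of_mem g hgB fun l hl hlg => by rw [hzero l hl hlg, geomPoly_zero]]
      exact ⟨hgD, rfl⟩
    · push Not at h
      rw [sum_eq_zero h, prod_eq_one fun l hl => by rw [h l hl, geomPoly_zero]]
      exact ⟨by omega, geomPoly_zero.symm⟩
  have hsplit : #A * D + ∑ i ∈ B, v i = q * D + r := by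
    rw [← hsumA, sum_filter_add_sum_filter_not, hsum]
  obtain ⟨hcard, hrest⟩ := eq_and_eq_of_mul_add_eq_mul_add hB.1 hr hsplit
  rw [← prod_filter_mul_prod_filter_not univ fun i => v i = D, hprodA, hB.2, hcard, hrest]

lemma sum_sq_le_mul_sum {D : ℕ} {v : ι → ℕ} (hv : ∀ i, v i ≤ D) :
    ∑ i, v i ^ 2 ≤ D * ∑ i, v i := by
  rw [mul_sum]
  exact sum_le_sum fun i _ => by rw [sq]; exact Nat.mul_le_mul_right _ (hv i)

@[to_additive]
lemma prod_comp_update_update [DecidableEq ι] {M : Type*} [CommMonoid M] (g : ℕ → M)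
    (v : ι → ℕ) {i j : ι} (hij : i ≠ j) (a b : ℕ) :
    ∏ l, g (Function.update (Function.update v i a) j b l) =
      g a * g b * ∏ l ∈ (univ.erase j).erase i, g (v l) := by
  rw [← mul_prod_erase univ _ (mem_univ j),
    ← mul_prod_erase _ _ (mem_erase.2 ⟨hij, mem_univ i⟩)]
  simp only [Function.update_self, Function.update_of_ne hij]
  rw [mul_left_comm, mul_assoc]
  congr 2
  refine prod_congr rfl fun l hl => ?_
  rw [Function.update_of_ne (ne_of_mem_erase (mem_of_mem_erase hl)),
    Function.update_of_ne (ne_of_mem_erase hl)]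

@[to_additive]
lemma prod_comp_eq_mul_prod_erase_erase [DecidableEq ι] {M : Type*} [CommMonoid M] (g : ℕ → M)
    (v : ι → ℕ) {i j : ι} (hij : i ≠ j) :
    ∏ l, g (v l) = g (v i) * g (v j) * ∏ l ∈ (univ.erase j).erase i, g (v l) := by
  simpa using prod_comp_update_update g v hij (v i) (v j)

lemma coeff_prod_geomPoly_update_le [DecidableEq ι] (v : ι → ℕ) {i j : ι} (hij : i ≠ j)
    (hj : 1 ≤ v j) (hji : v j ≤ v i) (e : ℕ) :
    (∏ l, geomPoly (Function.update (Function.update v i (v i + 1)) j (v j - 1) l)).coeff e ≤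
      (∏ l, geomPoly (v l)).coeff e := by
  obtain ⟨c, hc⟩ : ∃ c, v j = c + 1 := ⟨v j - 1, by omega⟩
  rw [prod_comp_update_update _ _ hij, prod_comp_eq_mul_prod_erase_erase _ _ hij, hc,
    Nat.add_sub_cancel, geomPoly_mul_geomPoly_succ (by omega), add_mul, Polynomial.coeff_add]
  exact Nat.le_add_right _ _

/-- `geomPoly D ^ q * geomPoly r` is `∏ geomPoly` of the compressed vector
`(D, …, D, r, 0, …, 0)`. -/
theorem coeff_geomPoly_pow_mul_le [DecidableEq ι] {D q r : ℕ} (hr : r < D) (v : ι → ℕ)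
    (hv : ∀ i, v i ≤ D) (hsum : ∑ i, v i = q * D + r) (e : ℕ) :
    (geomPoly D ^ q * geomPoly r).coeff e ≤ (∏ i, geomPoly (v i)).coeff e := by
  -- each exchange raises `∑ v i ^ 2`, which is bounded by `D * ∑ v i`
  induction hμ : D * (q * D + r) - ∑ i, v i ^ 2 using Nat.strong_induction_on generalizing v with
  | _ μ ih =>
  by_cases hbal : IsBalanced D v
  · rw [prod_geomPoly_of_isBalanced hr hv hsum hbal]
  obtain ⟨i, j, hij, hj, hji, hiD⟩ := exists_exchange_of_not_isBalanced hv hbal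
  set w := Function.update (Function.update v i (v i + 1)) j (v j - 1)
  have hw : ∀ l, w l ≤ D := fun l => by
    simp only [w, Function.update_apply]
    split_ifs <;> grind
  have hsumw : ∑ l, w l = q * D + r := by
    have h₁ : ∑ l, w l = _ := sum_comp_update_update (fun x => x) v hij (v i + 1) (v j - 1)
    have h₂ := sum_comp_eq_add_sum_erase_erase (fun x => x) v hij
    omega
  have hsqw : ∑ l, v l ^ 2 < ∑ l, w l ^ 2 := by
    rw [sum_comp_update_update (· ^ 2) v hij, sum_comp_eq_add_sum_erase_erase (· ^ 2) v hij]
    obtain ⟨c, hc⟩ : ∃ c, v j = c + 1 := ⟨v j - 1, by omega⟩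
    rw [hc, Nat.add_sub_cancel]
    nlinarith
  have hbound := sum_sq_le_mul_sum hw
  rw [hsumw] at hbound
  calc (geomPoly D ^ q * geomPoly r).coeff e
      ≤ (∏ l, geomPoly (w l)).coeff e := ih _ (by omega) w hw hsumw rfl
    _ ≤ (∏ l, geomPoly (v l)).coeff e := coeff_prod_geomPoly_update_le v hij hj hji e

lemma prod_geomPoly_mExp {n d q r : ℕ} (hq : q ≤ n) (hqr : r = 0 ∨ q < n) :
    ∏ i, geomPoly (mExp n d q r i) = geomPoly (d - 1) ^ q * geomPoly r := by
  let f : ℕ → ℕ[X] := fun i => geomPoly (if i < q then d - 1 else if i = q then r else 0)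
  have hlow : ∏ i ∈ range q, f i = geomPoly (d - 1) ^ q := by
    rw [prod_congr rfl fun i hi => (by simp [f, mem_range.1 hi] : f i = geomPoly (d - 1)),
      prod_const, card_range]
  have hhigh : ∏ i ∈ Ico q n, f i = geomPoly r := by
    rw [prod_eq_single q (fun i hi hiq => ?_) fun hq' => ?_]
    · simp [f]
    · simp [f, hiq, not_lt.2 (mem_Ico.1 hi).1, geomPoly_zero]
    · have : r = 0 := hqr.resolve_right fun h => hq' (mem_Ico.2 ⟨le_rfl, h⟩)
      simp [f, this, geomPoly_zero]
  rw [show ∏ i, geomPoly (mExp n d q r i) = ∏ i : Fin n, f i from rfl,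
    Fin.prod_univ_eq_prod_range f n, ← prod_range_mul_prod_Ico f hq, hlow, hhigh]

theorem Cndk_le_divCount {n d q r : ℕ} (hr : r < d - 1) (v : Fin n → ℕ) (hv : ∀ i, v i ≤ d - 1)
    (hsum : ∑ i, v i = q * (d - 1) + r) : Cndk n d q r ≤ divCount d v := by
  have hle : q * (d - 1) + r ≤ n * (d - 1) := by
    simpa [← hsum] using sum_le_card_nsmul univ v (d - 1) fun i _ => hv i
  have hq : q ≤ n := by
    by_contra! h
    nlinarith
  have hqr : r = 0 ∨ q < n := by
    rcases hq.lt_or_eq with h | rfl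
    · exact Or.inr h
    · exact Or.inl (by omega)
  rw [Cndk, divCount_eq_coeff_prod, divCount_eq_coeff_prod, prod_geomPoly_mExp hq hqr]
  exact coeff_geomPoly_pow_mul_le hr v hv hsum d

end GeomPoly

open MonomialOrder Module

lemma leadExp_eq_degree {n : ℕ} {K : Type} [Field K] (m : MonomialOrder (Fin n))
    (p : MvPolynomial (Fin n) K) : leadExp m p = m.degree p := rfl

section LeadingExponents

variable {σ K : Type*} [Field K] (m : MonomialOrder σ)

lemma degree_degree_of_isHomogeneous {f : MvPolynomial σ K} {k : ℕ} (hf : f.IsHomogeneous k)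
    (hf0 : f ≠ 0) : (m.degree f).degree = k := by
  by_contra h
  exact (m.coeff_degree_ne_zero_iff.2 hf0) (hf.coeff_eq_zero h)

lemma finrank_le_card_of_degree_mem {V : Submodule K (MvPolynomial σ K)} {S : Finset (σ →₀ ℕ)}
    (hS : ∀ f ∈ V, f ≠ 0 → m.degree f ∈ S) : finrank K V ≤ #S := by
  let Φ : V →ₗ[K] S → K := (LinearMap.pi fun w : S => lcoeff K (w : σ →₀ ℕ)) ∘ₗ V.subtype
  have hΦ : Function.Injective Φ := by
    rw [← LinearMap.ker_eq_bot, LinearMap.ker_eq_bot']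
    intro f hf
    by_contra hf0
    have hf0' : (f : MvPolynomial σ K) ≠ 0 := by simpa using hf0
    exact m.coeff_degree_ne_zero_iff.2 hf0' (congrFun hf ⟨_, hS f f.2 hf0'⟩)
  simpa using LinearMap.finrank_le_finrank_of_injective hΦ

lemma exists_mem_ne_zero_degree_le [Fintype σ] [DecidableEq σ] {V : Submodule K (MvPolynomial σ K)}
    {d : ℕ} (hV : V ≤ homogeneousSubmodule σ K d) (w : σ →₀ ℕ)
    (hcard : (Fintype.card σ + d - 1).choose d < finrank K V + #{u ∈ Iic w | u.degree = d}) :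
    ∃ f ∈ V, f ≠ 0 ∧ m.degree f ≤ w := by
  by_contra! h
  set T := (univ : Finset σ).finsuppAntidiag d
  set Dw := {u ∈ Iic w | u.degree = d}
  have hDwT : Dw ⊆ T := fun u hu => by
    simp [T, Dw, mem_finsuppAntidiag, ← Finsupp.degree_eq_sum] at hu ⊢
    exact hu.2
  have hle := finrank_le_card_of_degree_mem m (S := T \ Dw) fun f hf hf0 => by
    have hdeg := degree_degree_of_isHomogeneous m (hV hf) hf0
    simp only [mem_sdiff, T, Dw, mem_finsuppAntidiag, mem_filter, mem_Iic, not_and]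
    exact ⟨⟨by rw [← Finsupp.degree_eq_sum, hdeg], subset_univ _⟩, fun h' => absurd h' (h f hf hf0)⟩
  rw [card_sdiff_of_subset hDwT, card_finsuppAntidiag_nat_eq_choose, card_univ] at hle
  have := card_le_card hDwT
  rw [card_finsuppAntidiag_nat_eq_choose, card_univ] at this
  omega

end LeadingExponents

lemma card_filter_Iic_degree_eq_divCount {n : ℕ} (d : ℕ) (w : Fin n →₀ ℕ) :
    #{u ∈ Iic w | u.degree = d} = divCount d w := by
  refine card_nbij' (fun u => ⇑u) Finsupp.equivFunOnFinite.symm (fun u hu => ?_)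
    (fun a ha => ?_) (fun u _ => Finsupp.equivFunOnFinite_symm_coe u) (fun a _ => rfl)
  · simpa [Finsupp.degree_eq_sum] using hu
  · simpa [Finsupp.degree_eq_sum, Finsupp.le_def, Pi.le_def] using ha

lemma exists_degree_le_of_X_pow_mem_ltIdeal {n : ℕ} {K : Type} [Field K] (m : MonomialOrder (Fin n))
    {I : Ideal (MvPolynomial (Fin n) K)} {i : Fin n} {d : ℕ}
    (h : (X i : MvPolynomial (Fin n) K) ^ d ∈ ltIdeal m I) :
    ∃ f ∈ I, f ≠ 0 ∧ m.degree f ≤ Finsupp.single i d := by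
  have hset : {q | ∃ p ∈ I, p ≠ 0 ∧ q = monomial (leadExp m p) (1 : K)} =
      (fun e => monomial e 1) '' {e | ∃ f ∈ I, f ≠ 0 ∧ m.degree f = e} := by
    ext x
    simp only [Set.mem_ofPred_eq, Set.mem_image, leadExp_eq_degree]
    grind
  rw [ltIdeal, hset, mem_ideal_span_monomial_image] at h
  obtain ⟨e, ⟨f, hfI, hf0, rfl⟩, hle⟩ :=
    h (Finsupp.single i d) (by simp [X_pow_eq_monomial])
  exact ⟨f, hfI, hf0, hle⟩

section Reduction

variable {σ K : Type*} [Field K] (m : MonomialOrder σ)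

lemma exists_mem_degree_eq_of_degree_le {I : Ideal (MvPolynomial σ K)} {f : MvPolynomial σ K}
    (hfI : f ∈ I) (hf0 : f ≠ 0) {w : σ →₀ ℕ} (hw : m.degree f ≤ w) :
    ∃ g ∈ I, g ≠ 0 ∧ m.degree g = w := by
  classical
  have hmon : monomial (w - m.degree f) (1 : K) ≠ 0 := by simp
  refine ⟨monomial (w - m.degree f) 1 * f, I.mul_mem_left _ hfI, mul_ne_zero hmon hf0, ?_⟩
  rw [m.degree_mul hmon hf0, m.degree_monomial, if_neg one_ne_zero, tsub_add_cancel_of_le hw]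

theorem mem_of_support_subset {W : Submodule K (MvPolynomial σ K)} {S : Set (σ →₀ ℕ)}
    (hS : ∀ w ∈ S, ∃ g ∈ W, g ≠ 0 ∧ m.degree g = w ∧ ↑g.support ⊆ S)
    {f : MvPolynomial σ K} (hf : ↑f.support ⊆ S) : f ∈ W := by
  classical
  induction hμ : m.toSyn (m.degree f) using WellFoundedLT.induction generalizing f with
  | _ μ ih =>
  by_cases hf0 : f = 0
  · exact hf0 ▸ W.zero_mem
  obtain ⟨g, hgW, hg0, hgf, hgS⟩ := hS _ (hf (m.degree_mem_support hf0))
  set f' := f - (m.leadingCoeff f / m.leadingCoeff g) • g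
  have hf' : f' ∈ W := by
    by_cases hf'0 : f' = 0
    · exact hf'0 ▸ W.zero_mem
    refine ih _ ?_ (fun u hu => ?_) rfl
    · have hg0' : g.coeff (m.degree f) ≠ 0 := hgf ▸ m.coeff_degree_ne_zero_iff.2 hg0
      have hcoeff : f'.coeff (m.degree f) = 0 := by
        simp [f', MonomialOrder.leadingCoeff, hgf, div_mul_cancel₀ _ hg0']
      refine hμ ▸ lt_of_le_of_ne ?_ fun h => ?_
      · exact degree_sub_le.trans (max_le le_rfl (degree_smul_le.trans_eq (by rw [hgf])))
      · exact m.coeff_degree_ne_zero_iff.2 hf'0 (m.toSyn.injective h ▸ hcoeff)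
    · rcases Finset.mem_union.1 (support_sub σ f _ hu) with hu | hu
      · exact hf hu
      · exact hgS (support_smul hu)
  simpa [f'] using W.add_mem hf' (W.smul_mem (m.leadingCoeff f / m.leadingCoeff g) hgW)

end Reduction

section Homogeneous

attribute [local instance] MvPolynomial.gradedAlgebra

variable {σ K : Type*} [Field K] (m : MonomialOrder σ)

lemma isHomogeneous_span {s : Set (MvPolynomial σ K)} {d : ℕ}
    (hs : s ⊆ homogeneousSubmodule σ K d) :
    (Ideal.span s).IsHomogeneous (homogeneousSubmodule σ K) :=
  Ideal.homogeneous_span _ _ fun _ hx => ⟨d, hs hx⟩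

theorem mem_of_isHomogeneous_of_forall_degree {I : Ideal (MvPolynomial σ K)}
    (hI : I.IsHomogeneous (homogeneousSubmodule σ K)) {k : ℕ}
    (hk : ∀ w : σ →₀ ℕ, w.degree = k → ∃ g ∈ I, g ≠ 0 ∧ m.degree g = w)
    {f : MvPolynomial σ K} (hf : f ∈ homogeneousSubmodule σ K k) : f ∈ I := by
  classical
  refine mem_of_support_subset m (W := I.restrictScalars K) (S := {w | w.degree = k})
    (fun w hw => ?_) fun u hu => ?_
  · obtain ⟨g, hgI, hg0, hgw⟩ := hk w hw
    have hwg : w ∈ (homogeneousComponent k g).support := by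
      rw [support_homogeneousComponent, mem_filter, ← hgw]
      exact ⟨m.degree_mem_support hg0, hgw ▸ hw⟩
    refine ⟨_, homogeneousComponent_mem_of_mem hI hgI k, support_nonempty.1 ⟨w, hwg⟩,
      m.toSyn.injective (le_antisymm ?_ (m.le_degree hwg)), fun u hu => ?_⟩
    · rw [← hgw]
      exact degree_le_degree_of_support_subset (by simp [support_homogeneousComponent])
    · rw [support_homogeneousComponent, coe_filter] at hu
      exact hu.2
  · by_contra hne
    exact mem_support_iff.1 hu (((mem_homogeneousSubmodule _ _).1 hf).coeff_eq_zero hne)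

end Homogeneous

theorem stmt_9_general (K : Type) [Field K] (n d k q r : ℕ)
    (hqr : k = q * (d - 1) + r) (hr : r < d - 1)
    (p : Fin (Nndk n d q r) → MvPolynomial (Fin n) K)
    (hp : ∀ i, p i ∈ homogeneousSubmodule (Fin n) K d)
    (hli : LinearIndependent K p)
    (m : MonomialOrder (Fin n))
    (hlt : ∀ i : Fin n, (X i : MvPolynomial (Fin n) K) ^ d ∈
      ltIdeal m (Ideal.span (Set.range p))) :
    ∀ f ∈ homogeneousSubmodule (Fin n) K k, f ∈ Ideal.span (Set.range p) := by
  have hpd : Set.range p ⊆ homogeneousSubmodule (Fin n) K d := Set.range_subset_iff.2 hp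
  refine fun f hf => mem_of_isHomogeneous_of_forall_degree m (isHomogeneous_span hpd)
    (fun w hw => ?_) hf
  obtain ⟨g, hgI, hg0, hgw⟩ : ∃ g ∈ Ideal.span (Set.range p), g ≠ 0 ∧ m.degree g ≤ w := by
    by_cases hbig : ∃ i, d ≤ w i
    · obtain ⟨i, hi⟩ := hbig
      obtain ⟨g, hgI, hg0, hgi⟩ := exists_degree_le_of_X_pow_mem_ltIdeal m (hlt i)
      exact ⟨g, hgI, hg0, hgi.trans (Finsupp.single_le_iff.2 hi)⟩
    push Not at hbig
    have hC := Cndk_le_divCount hr w (fun i => by have := hbig i; omega)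
      (by rw [← Finsupp.degree_eq_sum, hw, hqr])
    obtain ⟨g, hgV, hg0, hgw⟩ := exists_mem_ne_zero_degree_le m
      (Submodule.span_le.2 hpd) w (by
        rw [finrank_span_eq_card hli, Fintype.card_fin, Fintype.card_fin,
          card_filter_Iic_degree_eq_divCount, Nndk]
        omega)
    exact ⟨g, Submodule.span_le_restrictScalars K _ _ hgV, hg0, hgw⟩
  exact exists_mem_degree_eq_of_degree_le m hgI hg0 hgw

/-- Fix `n ≥ 1`, `d ≥ 2`, `d ≤ k ≤ n(d-1)`, `k = q(d-1)+r`, `0 ≤ r < d-1`, and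
`N = N(n,d,k)`. Let `I` be an ideal generated by `N` linearly independent homogeneous
polynomials of degree `d` such that, for some monomial order, `Lt(I)` contains
`x₁^d, …, x_n^d`. Then `I` contains every homogeneous polynomial of degree `k`. -/
theorem stmt_9 (K : Type) [Field K] (n d k q r : ℕ) (hn : 1 ≤ n) (hd : 2 ≤ d)
    (hdk : d ≤ k) (hk : k ≤ n * (d - 1)) (hqr : k = q * (d - 1) + r) (hr : r < d - 1)
    (p : Fin (Nndk n d q r) → MvPolynomial (Fin n) K)
    (hp : ∀ i, p i ∈ homogeneousSubmodule (Fin n) K d)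
    (hli : LinearIndependent K p)
    (m : MonomialOrder (Fin n))
    (hlt : ∀ i : Fin n, (X i : MvPolynomial (Fin n) K) ^ d ∈
      ltIdeal m (Ideal.span (Set.range p))) :
    ∀ f ∈ homogeneousSubmodule (Fin n) K k, f ∈ Ideal.span (Set.range p) :=
  stmt_9_general K n d k q r hqr hr p hp hli m hlt
end

section
/- Let I ⊆ ℝ[x,y] be an ideal generated by 3 linearly independent homogeneous cubics such that √I = ⟨x,y⟩. Then I contains all homogeneous polynomials of degree 4, i.e., HF₄(I) = 0. -/
open MvPolynomial

/-- The Hilbert function `HF_t(I) = dim_ℝ (ℝ[x,y]_t / I_t)`. -/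
noncomputable def HF (n : ℕ) (I : Ideal (MvPolynomial (Fin n) ℝ)) (t : ℕ) : ℕ :=
  Module.finrank ℝ (↥(homogeneousSubmodule (Fin n) ℝ t) ⧸
    (Submodule.comap (homogeneousSubmodule (Fin n) ℝ t).subtype (Submodule.restrictScalars ℝ I)))

/-!
Identify binary forms of degree `d` with their coefficient vectors in `K^(d+1)`. If the quartics
`x * p i`, `y * p i` did not span all quartics, some nonzero `b : K^5` would be orthogonal to all
their coefficient vectors. Then both shifted windows `(b₀, …, b₃)` and `(b₁, …, b₄)` are orthogonal
to the three independent coefficient vectors of the `p i`, so they are proportional. Such a Hankel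
vector is, up to a scalar, the vector of monomials `u ^ (3 - j) * v ^ j` at a point `(u, v) ≠ 0`
(either `(1, r)` or `(0, 1)`), which is then a common real zero of the `p i`. But `x` and `y` lie
in the radical, so they vanish at every common zero.
-/

open Matrix

noncomputable section

section BinaryForms

variable {R : Type*} [CommSemiring R]

def binaryExp (a b : ℕ) : Fin 2 →₀ ℕ := Finsupp.single 0 a + Finsupp.single 1 b

@[simp] lemma binaryExp_apply_zero (a b : ℕ) : binaryExp a b 0 = a := by simp [binaryExp]

@[simp] lemma binaryExp_apply_one (a b : ℕ) : binaryExp a b 1 = b := by simp [binaryExp]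

lemma eq_binaryExp (m : Fin 2 →₀ ℕ) : m = binaryExp (m 0) (m 1) := by
  ext i; fin_cases i <;> simp

lemma Finsupp.weight_one_fin_two (m : Fin 2 →₀ ℕ) : Finsupp.weight 1 m = m 0 + m 1 := by
  simp [Finsupp.weight_apply, Finsupp.sum_fintype]

variable (R) in
def binaryCoeffs (d : ℕ) : MvPolynomial (Fin 2) R →ₗ[R] Fin (d + 1) → R :=
  LinearMap.pi fun j => lcoeff R (binaryExp (d - j) j)

lemma binaryCoeffs_apply (d : ℕ) (f : MvPolynomial (Fin 2) R) (j : Fin (d + 1)) :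
    binaryCoeffs R d f j = coeff (binaryExp (d - j) j) f := rfl

def binaryMonomials (d : ℕ) (u v : R) : Fin (d + 1) → R := fun j => u ^ (d - j) * v ^ (j : ℕ)

lemma sum_monomial_binaryCoeffs {d : ℕ} {f : MvPolynomial (Fin 2) R} (hf : f.IsHomogeneous d) :
    ∑ j : Fin (d + 1), monomial (binaryExp (d - j) j) (binaryCoeffs R d f j) = f := by
  have hinj : Function.Injective fun j : Fin (d + 1) => binaryExp (d - j) j := fun i j h => by
    simpa [Fin.val_inj] using DFunLike.congr_fun h 1
  have hsupp : f.support ⊆ Finset.univ.image fun j : Fin (d + 1) => binaryExp (d - j) j := by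
    intro m hm
    have hdeg : m 0 + m 1 = d := by
      rw [← Finsupp.weight_one_fin_two]; exact hf (mem_support_iff.mp hm)
    refine Finset.mem_image.mpr ⟨⟨m 1, by omega⟩, Finset.mem_univ _, ?_⟩
    conv_rhs => rw [eq_binaryExp m]
    simp only; congr 1; omega
  conv_rhs => rw [f.as_sum, Finset.sum_subset hsupp fun m _ hm => by
    rw [notMem_support_iff.mp hm, monomial_zero]]
  rw [Finset.sum_image fun i _ j _ h => hinj h]
  rfl

lemma binaryCoeffs_injOn (d : ℕ) :
    Set.InjOn (binaryCoeffs R d) (homogeneousSubmodule (Fin 2) R d) := fun f hf g hg h => by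
  rw [← sum_monomial_binaryCoeffs hf, ← sum_monomial_binaryCoeffs hg, h]

lemma eval_eq_binaryCoeffs_dotProduct {d : ℕ} {f : MvPolynomial (Fin 2) R}
    (hf : f.IsHomogeneous d) (u v : R) :
    eval ![u, v] f = binaryCoeffs R d f ⬝ᵥ binaryMonomials d u v := by
  conv_lhs => rw [← sum_monomial_binaryCoeffs hf]
  simp [dotProduct, binaryMonomials, binaryExp, eval_monomial, Finsupp.prod_add_index', pow_add]

lemma binaryCoeffs_X_zero_mul (d : ℕ) (g : MvPolynomial (Fin 2) R) :
    binaryCoeffs R (d + 1) (X 0 * g) = Fin.snoc (α := fun _ => R) (binaryCoeffs R d g) 0 := by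
  ext j
  refine Fin.lastCases ?_ (fun j => ?_) j
  · simp [binaryCoeffs_apply, coeff_X_mul']
  · have hsub : binaryExp (d - j + 1) j - Finsupp.single 0 1 = binaryExp (d - j) j := by
      ext i; fin_cases i <;> simp
    simp [binaryCoeffs_apply, coeff_X_mul', show d + 1 - j = d - j + 1 by omega, hsub]

lemma binaryCoeffs_X_one_mul (d : ℕ) (g : MvPolynomial (Fin 2) R) :
    binaryCoeffs R (d + 1) (X 1 * g) = Fin.cons (α := fun _ => R) 0 (binaryCoeffs R d g) := by
  ext j
  refine Fin.cases ?_ (fun j => ?_) j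
  · simp [binaryCoeffs_apply, coeff_X_mul']
  · have hsub : binaryExp (d - j) (j + 1) - Finsupp.single 1 1 = binaryExp (d - j) j := by
      ext i; fin_cases i <;> simp
    simp [binaryCoeffs_apply, coeff_X_mul', hsub]

end BinaryForms

section LinearAlgebra

variable {K : Type*} [Field K]

theorem exists_eq_smul_of_mulVec_eq_zero {m n : Type*} [Fintype m] [Fintype n]
    {A : Matrix m n K} (hA : LinearIndependent K A.row)
    (hcard : Fintype.card n = Fintype.card m + 1) {x y : n → K}
    (hx : A *ᵥ x = 0) (hy : A *ᵥ y = 0) (hx0 : x ≠ 0) : ∃ r : K, y = r • x := by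
  have hker : Module.finrank K (LinearMap.ker A.mulVecLin) = 1 := by
    have := LinearMap.finrank_range_add_finrank_ker A.mulVecLin
    rw [← Matrix.rank, hA.rank_matrix, Module.finrank_fintype_fun_eq_card, hcard] at this
    omega
  obtain ⟨r, hr⟩ := (finrank_eq_one_iff_of_nonzero' (⟨x, hx⟩ : LinearMap.ker A.mulVecLin)
    fun h => hx0 (congrArg Subtype.val h)).mp hker ⟨y, hy⟩
  exact ⟨r, by simpa using congrArg Subtype.val hr.symm⟩

theorem Fin.eq_pow_mul_of_forall_succ_eq {M : Type*} [CommMonoid M] {n : ℕ} {b : Fin (n + 1) → M}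
    {r : M} (h : ∀ j : Fin n, b j.succ = r * b j.castSucc) (k : Fin (n + 1)) :
    b k = r ^ (k : ℕ) * b 0 := by
  induction k using Fin.induction with
  | zero => simp
  | succ j ih => rw [h, ih, Fin.val_castSucc, Fin.val_succ, pow_succ, mul_assoc, mul_left_comm]

theorem span_row_eq_top_of_mulVec_eq_zero {m n : Type*} [Fintype m] [Fintype n]
    {A : Matrix m n K} (hA : ∀ b, A *ᵥ b = 0 → b = 0) :
    Submodule.span K (Set.range A.row) = ⊤ := by
  apply Submodule.eq_top_of_finrank_eq
  rw [← Matrix.rank_eq_finrank_span_row, Matrix.rank,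
    LinearMap.finrank_range_of_inj ((injective_iff_map_eq_zero _).mpr hA)]

theorem exists_common_zero_of_shifts {d : ℕ} {c : Fin d → Fin (d + 1) → K}
    (hc : LinearIndependent K c) {b : Fin (d + 2) → K} (hb : b ≠ 0)
    (h0 : ∀ i, c i ⬝ᵥ (b ∘ Fin.castSucc) = 0) (h1 : ∀ i, c i ⬝ᵥ (b ∘ Fin.succ) = 0) :
    ∃ u v : K, (u ≠ 0 ∨ v ≠ 0) ∧ ∀ i, c i ⬝ᵥ binaryMonomials d u v = 0 := by
  by_cases hα : b ∘ Fin.castSucc = 0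
  · have hlast : b (Fin.last _) ≠ 0 := fun h =>
      hb (funext fun k => Fin.lastCases h (fun k => congrFun hα k) k)
    have hβ : b ∘ Fin.succ = b (Fin.last _) • binaryMonomials d 0 1 := by
      funext j
      refine Fin.lastCases ?_ (fun j => ?_) j
      · simp [binaryMonomials]
      · have hj : d - (j : ℕ) ≠ 0 := by omega
        simpa [binaryMonomials, ← Fin.succ_castSucc, hj] using congrFun hα j.succ
    refine ⟨0, 1, Or.inr one_ne_zero, fun i => ?_⟩
    simpa [hβ, dotProduct_smul, hlast] using h1 i
  · obtain ⟨r, hr⟩ := exists_eq_smul_of_mulVec_eq_zero (A := Matrix.of c) hc (by simp)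
      (funext h0) (funext h1) hα
    have hgeom := Fin.eq_pow_mul_of_forall_succ_eq fun j => congrFun hr j
    have hα' : b ∘ Fin.castSucc = b 0 • binaryMonomials d 1 r := by
      funext j
      simp [binaryMonomials, hgeom j.castSucc, mul_comm]
    have hb0 : b 0 ≠ 0 := fun h => hb (funext fun k => by simp [hgeom k, h])
    refine ⟨1, r, Or.inl one_ne_zero, fun i => ?_⟩
    simpa [hα', dotProduct_smul, hb0] using h0 i

theorem span_shifts_eq_top {d : ℕ} {c : Fin d → Fin (d + 1) → K} (hc : LinearIndependent K c)
    (hzero : ∀ u v : K, (∀ i, c i ⬝ᵥ binaryMonomials d u v = 0) → u = 0 ∧ v = 0) :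
    Submodule.span K (Set.range (Sum.elim (fun i => Fin.snoc (α := fun _ => K) (c i) 0)
      fun i => Fin.cons (α := fun _ => K) 0 (c i))) = ⊤ := by
  refine span_row_eq_top_of_mulVec_eq_zero (A := Matrix.of _) fun b hb => ?_
  by_contra hb0
  have hsnoc (v : Fin (d + 1) → K) :
      Fin.snoc (α := fun _ => K) v 0 ⬝ᵥ b = v ⬝ᵥ (b ∘ Fin.castSucc) := by
    simp [dotProduct, Fin.sum_univ_castSucc]
  have hcons (v : Fin (d + 1) → K) :
      Fin.cons (α := fun _ => K) 0 v ⬝ᵥ b = v ⬝ᵥ (b ∘ Fin.succ) := by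
    simp [dotProduct, Fin.sum_univ_succ]
  obtain ⟨u, v, huv, hz⟩ := exists_common_zero_of_shifts hc hb0
    (fun i => by simpa [mulVec, hsnoc] using congrFun hb (Sum.inl i))
    (fun i => by simpa [mulVec, hcons] using congrFun hb (Sum.inr i))
  obtain ⟨rfl, rfl⟩ := hzero u v hz
  simp at huv

end LinearAlgebra

theorem MvPolynomial.eval_eq_zero_of_mem_radical_span {σ R : Type*} [CommSemiring R]
    [IsReduced R] {s : Set (MvPolynomial σ R)} {w : σ → R} (hw : ∀ f ∈ s, eval w f = 0)
    {g : MvPolynomial σ R} (hg : g ∈ (Ideal.span s).radical) : eval w g = 0 := by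
  obtain ⟨n, hn⟩ := hg
  have hker : g ^ n ∈ RingHom.ker (eval w) :=
    Ideal.span_le.mpr (fun f hf => RingHom.mem_ker.mpr (hw f hf)) hn
  rw [RingHom.mem_ker, map_pow] at hker
  exact IsNilpotent.eq_zero ⟨n, hker⟩

theorem homogeneousSubmodule_succ_le_span {K : Type*} [Field K] {d : ℕ}
    {p : Fin d → MvPolynomial (Fin 2) K}
    (hp : ∀ i, p i ∈ homogeneousSubmodule (Fin 2) K d) (hli : LinearIndependent K p)
    (hzero : ∀ u v : K, (∀ i, eval ![u, v] (p i) = 0) → u = 0 ∧ v = 0) :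
    homogeneousSubmodule (Fin 2) K (d + 1) ≤ (Ideal.span (Set.range p)).restrictScalars K := by
  let c := binaryCoeffs K d ∘ p
  let q : Fin d ⊕ Fin d → MvPolynomial (Fin 2) K := Sum.elim (X 0 * p ·) (X 1 * p ·)
  have hq_hom : Submodule.span K (Set.range q) ≤ homogeneousSubmodule (Fin 2) K (d + 1) := by
    refine Submodule.span_le.mpr (Set.range_subset_iff.mpr fun k => ?_)
    rw [SetLike.mem_coe, mem_homogeneousSubmodule, add_comm]
    rcases k with i | i <;>
      exact (isHomogeneous_X K _).mul ((mem_homogeneousSubmodule _ _).mp (hp i))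
  have hq_mem : Submodule.span K (Set.range q) ≤ (Ideal.span (Set.range p)).restrictScalars K := by
    refine Submodule.span_le.mpr (Set.range_subset_iff.mpr fun k => ?_)
    rcases k with i | i <;>
      exact Ideal.mul_mem_left _ _ (Ideal.subset_span (Set.mem_range_self i))
  have hc : LinearIndependent K c := hli.map_injOn _ <|
    (binaryCoeffs_injOn d).mono (Submodule.span_le.mpr (Set.range_subset_iff.mpr hp))
  have hc_zero (u v : K) (h : ∀ i, c i ⬝ᵥ binaryMonomials d u v = 0) : u = 0 ∧ v = 0 :=
    hzero u v fun i => by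
      rw [eval_eq_binaryCoeffs_dotProduct ((mem_homogeneousSubmodule _ _).mp (hp i))]; exact h i
  have hq_coeffs : binaryCoeffs K (d + 1) ∘ q =
      Sum.elim (fun i => Fin.snoc (α := fun _ => K) (c i) 0) fun i => Fin.cons 0 (c i) := by
    funext k
    rcases k with i | i <;> simp [q, c, binaryCoeffs_X_zero_mul, binaryCoeffs_X_one_mul]
  have hspan : (Submodule.span K (Set.range q)).map (binaryCoeffs K (d + 1)) = ⊤ := by
    rw [Submodule.map_span, ← Set.range_comp, hq_coeffs]
    exact span_shifts_eq_top hc hc_zero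
  intro f hf
  obtain ⟨g, hg, hgf⟩ := hspan.symm ▸ Submodule.mem_top (x := binaryCoeffs K (d + 1) f)
  rw [← binaryCoeffs_injOn (d + 1) (hq_hom hg) hf hgf]
  exact hq_mem hg

theorem HF_eq_zero_of_le {n t : ℕ} {I : Ideal (MvPolynomial (Fin n) ℝ)}
    (h : homogeneousSubmodule (Fin n) ℝ t ≤ I.restrictScalars ℝ) : HF n I t = 0 := by
  rw [HF, Submodule.comap_subtype_eq_top.mpr h]
  exact Module.finrank_zero_of_subsingleton

end

/-- If `I ⊆ ℝ[x,y]` is generated by 3 linearly independent homogeneous cubics with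
`√I = ⟨x,y⟩`, then `I` contains all homogeneous quartics, i.e. `HF₄(I) = 0`. -/
theorem stmt_13 (p : Fin 3 → MvPolynomial (Fin 2) ℝ)
    (hp : ∀ i, p i ∈ homogeneousSubmodule (Fin 2) ℝ 3)
    (hli : LinearIndependent ℝ p)
    (hrad : (Ideal.span (Set.range p)).radical
      = Ideal.span {(X 0 : MvPolynomial (Fin 2) ℝ), X 1}) :
    (∀ f ∈ homogeneousSubmodule (Fin 2) ℝ 4, f ∈ Ideal.span (Set.range p)) ∧
    HF 2 (Ideal.span (Set.range p)) 4 = 0 := by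
  have hzero (u v : ℝ) (h : ∀ i, eval ![u, v] (p i) = 0) : u = 0 ∧ v = 0 := by
    have hX (j : Fin 2) : eval ![u, v] (X j) = 0 :=
      eval_eq_zero_of_mem_radical_span (by rintro _ ⟨i, rfl⟩; exact h i)
        (hrad ▸ Ideal.subset_span (by fin_cases j <;> simp))
    exact ⟨by simpa using hX 0, by simpa using hX 1⟩
  have hle := homogeneousSubmodule_succ_le_span hp hli hzero
  exact ⟨fun f hf => hle hf, HF_eq_zero_of_le hle⟩
end
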